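/- Up to an exponentially small correction of size exp(−ω₀²/B²), the correlation function 𝒴(s,s') = (1/Δt)∫ ℳ(s,t)ℳ(s',t) dt of the single-target trace ℳ(s,t) = cos(ω₀(t − αs)) exp(−B²(t−αs)²/2) (linearized travel time with slope α) equals (√π/(2BΔt)) cos(ω₀ α(s−s')) exp(−B²α²(s−s')²/4), i.e. it depends only on s − s'. -/

import Mathlib

/-!
Centre the time variable at the midpoint of the two delays `αs` and `αs'`, and put
`d = α(s - s')`. The product of the two pulses becomes the envelope `exp(-B²d²/4)` times
`(cos(ω₀d) + cos(2ω₀u)) exp(-B²u²) / 2`, by the product-to-sum formula and completing the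
square. The first term integrates to the Toeplitz kernel. The second one is the Fourier
transform of a Gaussian at frequency `2ω₀`, that is `(√π/B) exp(-ω₀²/B²)`; since the
envelope is at most `1`, this gives the error bound.
-/

open MeasureTheory Real

theorem integrable_cos_mul_exp_neg_mul_sq {b : ℝ} (hb : 0 < b) (ω : ℝ) :
    Integrable fun x : ℝ => cos (ω * x) * exp (-b * x ^ 2) := by
  refine (integrable_exp_neg_mul_sq hb).mono' (by fun_prop) (.of_forall fun x => ?_)
  rw [norm_mul, norm_of_nonneg (exp_pos _).le]
  exact mul_le_of_le_one_left (exp_pos _).le (abs_cos_le_one _)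

theorem integral_cos_mul_exp_neg_mul_sq {b : ℝ} (hb : 0 < b) (ω : ℝ) :
    ∫ x : ℝ, cos (ω * x) * exp (-b * x ^ 2) = √(π / b) * exp (-ω ^ 2 / (4 * b)) := by
  have hb' : 0 < (b : ℂ).re := by simpa using hb
  have hfactor : ∀ x : ℝ, Complex.exp (Complex.I * ω * x) * Complex.exp (-b * x ^ 2)
      = Complex.exp (↑(ω * x) * Complex.I) * ↑(exp (-b * x ^ 2)) := fun x => by
    push_cast; ring_nf
  have hint : Integrable fun x : ℝ =>
      Complex.exp (Complex.I * ω * x) * Complex.exp (-b * x ^ 2) := by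
    simp_rw [hfactor]
    refine (integrable_exp_neg_mul_sq hb).ofReal.bdd_mul (c := 1) (by fun_prop)
      (.of_forall fun x => ?_)
    rw [Complex.norm_exp_ofReal_mul_I]
  calc ∫ x : ℝ, cos (ω * x) * exp (-b * x ^ 2)
      = ∫ x : ℝ, RCLike.re (Complex.exp (Complex.I * ω * x) * Complex.exp (-b * x ^ 2)) := by
        simp_rw [hfactor, RCLike.re_to_complex, Complex.re_mul_ofReal, Complex.exp_ofReal_mul_I_re]
    _ = RCLike.re (∫ x : ℝ, Complex.exp (Complex.I * ω * x) * Complex.exp (-b * x ^ 2)) :=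
        integral_re hint
    _ = _ := by
        rw [fourierIntegral_gaussian hb', RCLike.re_to_complex, ← Complex.ofReal_div,
          show (1 / 2 : ℂ) = ((1 / 2 : ℝ) : ℂ) by norm_num,
          ← Complex.ofReal_cpow (by positivity), ← sqrt_eq_rpow,
          show -(ω : ℂ) ^ 2 / (4 * b) = ((-ω ^ 2 / (4 * b) : ℝ) : ℂ) by push_cast; rfl,
          ← Complex.ofReal_exp, ← Complex.ofReal_mul, Complex.ofReal_re]

noncomputable def gaussianPulse (ω b t : ℝ) : ℝ := cos (ω * t) * exp (-(b * t ^ 2) / 2)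

theorem gaussianPulse_sub_mul_gaussianPulse_add (ω b u d : ℝ) :
    gaussianPulse ω b (u - d / 2) * gaussianPulse ω b (u + d / 2) =
      exp (-(b * d ^ 2) / 4) / 2 *
        (cos (ω * d) * exp (-b * u ^ 2) + cos (2 * ω * u) * exp (-b * u ^ 2)) := by
  have hcos : 2 * (cos (ω * (u - d / 2)) * cos (ω * (u + d / 2))) =
      cos (ω * d) + cos (2 * ω * u) := by
    rw [← mul_assoc, two_mul_cos_mul_cos, ← cos_neg (_ - _)]
    ring_nf
  have hexp : exp (-(b * (u - d / 2) ^ 2) / 2) * exp (-(b * (u + d / 2) ^ 2) / 2) =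
      exp (-(b * d ^ 2) / 4) * exp (-b * u ^ 2) := by
    rw [← exp_add, ← exp_add]; ring_nf
  unfold gaussianPulse
  linear_combination exp (-(b * d ^ 2) / 4) * exp (-b * u ^ 2) / 2 * hcos
    + cos (ω * (u - d / 2)) * cos (ω * (u + d / 2)) * hexp

theorem integral_gaussianPulse_mul_gaussianPulse {b : ℝ} (hb : 0 < b) (ω a a' : ℝ) :
    ∫ t, gaussianPulse ω b (t - a) * gaussianPulse ω b (t - a') =
      √(π / b) / 2 * exp (-(b * (a - a') ^ 2) / 4) *
        (cos (ω * (a - a')) + exp (-(ω ^ 2 / b))) := by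
  set d := a - a'
  rw [← integral_add_right_eq_self _ ((a + a') / 2)]
  have hcentre : ∀ u, gaussianPulse ω b (u + (a + a') / 2 - a) *
      gaussianPulse ω b (u + (a + a') / 2 - a') =
        gaussianPulse ω b (u - d / 2) * gaussianPulse ω b (u + d / 2) := fun u => by
    congr 2 <;> ring
  simp_rw [hcentre, gaussianPulse_sub_mul_gaussianPulse_add, integral_const_mul]
  rw [integral_add ((integrable_exp_neg_mul_sq hb).const_mul _)
      (integrable_cos_mul_exp_neg_mul_sq hb _), integral_const_mul, integral_gaussian,
    integral_cos_mul_exp_neg_mul_sq hb, show -(2 * ω) ^ 2 / (4 * b) = -(ω ^ 2 / b) by ring]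
  ring

/-- Up to an exponentially small correction of size `exp(−ω₀²/B²)`, the correlation
function `𝒴(s,s') = (1/Δt)∫ ℳ(s,t)ℳ(s',t) dt` of the single-target trace
`ℳ(s,t) = cos(ω₀(t − αs)) exp(−B²(t−αs)²/2)` equals
`(√π/(2BΔt)) cos(ω₀α(s−s')) exp(−B²α²(s−s')²/4)`. -/
theorem single_target_correlation_approx_toeplitz (B Δt ω₀ α : ℝ)
    (hB : 0 < B) (hΔt : 0 < Δt) (s s' : ℝ) :
    let M : ℝ → ℝ → ℝ := fun σ t =>
      Real.cos (ω₀ * (t - α * σ)) * Real.exp (-(B ^ 2 * (t - α * σ) ^ 2) / 2)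
    |(1 / Δt) * (∫ t : ℝ, M s t * M s' t) -
        Real.sqrt Real.pi / (2 * B * Δt) * (Real.cos (ω₀ * α * (s - s')) *
          Real.exp (-(B ^ 2 * α ^ 2 * (s - s') ^ 2) / 4))| ≤
      Real.sqrt Real.pi / (2 * B * Δt) * Real.exp (-(ω₀ ^ 2 / B ^ 2)) := by
  intro M
  have hY : ∫ t, M s t * M s' t = √π / B / 2 * exp (-(B ^ 2 * α ^ 2 * (s - s') ^ 2) / 4) *
      (cos (ω₀ * α * (s - s')) + exp (-(ω₀ ^ 2 / B ^ 2))) := by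
    change ∫ t, gaussianPulse ω₀ (B ^ 2) (t - α * s) *
      gaussianPulse ω₀ (B ^ 2) (t - α * s') = _
    rw [integral_gaussianPulse_mul_gaussianPulse (by positivity), sqrt_div' _ (sq_nonneg B),
      sqrt_sq hB.le, ← mul_sub, mul_pow, mul_assoc ω₀, mul_assoc (B ^ 2)]
  have hdiff : (1 / Δt) * (∫ t, M s t * M s' t) - √π / (2 * B * Δt) *
      (cos (ω₀ * α * (s - s')) * exp (-(B ^ 2 * α ^ 2 * (s - s') ^ 2) / 4)) =
        √π / (2 * B * Δt) *
          (exp (-(B ^ 2 * α ^ 2 * (s - s') ^ 2) / 4) * exp (-(ω₀ ^ 2 / B ^ 2))) := by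
    rw [hY]; field_simp; ring
  have hdecay : exp (-(B ^ 2 * α ^ 2 * (s - s') ^ 2) / 4) ≤ 1 := by
    rw [exp_le_one_iff]; nlinarith [sq_nonneg (B * α * (s - s'))]
  rw [hdiff, abs_of_nonneg (by positivity)]
  gcongr
  exact mul_le_of_le_one_left (exp_pos _).le hdecay
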